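/- Let x₁ ≠ x₂ be odd positive integers and t ≥ 1. The parity patterns of x₁ and x₂ agree for the first t steps but differ at the (t+1)-th step if and only if x₁ ≡ x₂ (mod 2^t) and x₁ ≡ x₂ + 2^t (mod 2^{t+1}). -/
import Mathlib

def T (x : ℕ) : ℕ := if x % 2 = 0 then x / 2 else (3 * x + 1) / 2

lemma two_T (x : ℕ) : 2 * T x = if x % 2 = 0 then x else 3 * x + 1 := by
  unfold T; split <;> omega

lemma dvd2 (k : ℕ) (d : ℤ) : (2:ℤ) ^ (k+1) ∣ 2 * d ↔ (2:ℤ) ^ k ∣ d := by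
  rw [pow_succ, mul_comm ((2:ℤ)^k) 2]
  exact mul_dvd_mul_iff_left two_ne_zero

lemma step (k x y : ℕ) :
    x ≡ y [MOD 2 ^ (k + 1)] ↔ x % 2 = y % 2 ∧ T x ≡ T y [MOD 2 ^ k] := by
  have hx := two_T x
  have hy := two_T y
  rw [Nat.modEq_iff_dvd, Nat.modEq_iff_dvd]
  push_cast
  have hcop : IsCoprime ((2:ℤ) ^ (k+1)) 3 := by
    apply IsCoprime.pow_left
    rw [Int.isCoprime_iff_gcd_eq_one]; decide
  constructor
  · intro h
    have hpar : x % 2 = y % 2 := by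
      have h2 : (2:ℤ) ∣ (y:ℤ) - x := dvd_trans (dvd_pow_self 2 (Nat.succ_ne_zero k)) h
      omega
    refine ⟨hpar, ?_⟩
    by_cases he : x % 2 = 0
    · rw [if_pos he] at hx
      rw [if_pos (hpar ▸ he)] at hy
      rw [← dvd2]
      have heq : 2 * ((T y : ℤ) - T x) = (y:ℤ) - x := by
        have hx' : (2:ℤ) * T x = x := by exact_mod_cast hx
        have hy' : (2:ℤ) * T y = y := by exact_mod_cast hy
        linarith
      rw [heq]; exact h
    · rw [if_neg he] at hx
      rw [if_neg (by omega : ¬ y % 2 = 0)] at hy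
      rw [← dvd2]
      have heq : 2 * ((T y : ℤ) - T x) = 3 * ((y:ℤ) - x) := by
        have hx' : (2:ℤ) * T x = 3 * x + 1 := by exact_mod_cast hx
        have hy' : (2:ℤ) * T y = 3 * y + 1 := by exact_mod_cast hy
        linarith
      rw [heq]
      exact Dvd.dvd.mul_left h 3
  · rintro ⟨hpar, h⟩
    by_cases he : x % 2 = 0
    · rw [if_pos he] at hx
      rw [if_pos (hpar ▸ he)] at hy
      have heq : 2 * ((T y : ℤ) - T x) = (y:ℤ) - x := by
        have hx' : (2:ℤ) * T x = x := by exact_mod_cast hx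
        have hy' : (2:ℤ) * T y = y := by exact_mod_cast hy
        linarith
      rw [← heq, dvd2]; exact h
    · rw [if_neg he] at hx
      rw [if_neg (by omega : ¬ y % 2 = 0)] at hy
      have heq : 2 * ((T y : ℤ) - T x) = 3 * ((y:ℤ) - x) := by
        have hx' : (2:ℤ) * T x = 3 * x + 1 := by exact_mod_cast hx
        have hy' : (2:ℤ) * T y = 3 * y + 1 := by exact_mod_cast hy
        linarith
      have h3 : (2:ℤ) ^ (k+1) ∣ ((y:ℤ) - x) * 3 := by
        rw [mul_comm, ← heq, dvd2]; exact h
      exact hcop.dvd_of_dvd_mul_right h3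

lemma patt (t : ℕ) : ∀ x y : ℕ, (x ≡ y [MOD 2 ^ t] ↔ ∀ j < t, T^[j] x % 2 = T^[j] y % 2) := by
  induction t with
  | zero => intro x y; simp [Nat.modEq_one, pow_zero]
  | succ t ih =>
    intro x y
    rw [step]
    constructor
    · rintro ⟨hpar, h⟩ j hj
      cases j with
      | zero => simpa using hpar
      | succ j =>
        rw [Function.iterate_succ_apply, Function.iterate_succ_apply]
        exact (ih (T x) (T y)).1 h j (by omega)
    · intro h
      refine ⟨by simpa using h 0 (by omega), (ih (T x) (T y)).2 ?_⟩
      intro j hj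
      have := h (j+1) (by omega)
      rwa [Function.iterate_succ_apply, Function.iterate_succ_apply] at this

theorem stmt_8 (x₁ x₂ t : ℕ) (h₁ : Odd x₁) (h₂ : Odd x₂)
    (h₁p : 0 < x₁) (h₂p : 0 < x₂) (hne : x₁ ≠ x₂) (ht : 1 ≤ t) :
    ((∀ j < t, T^[j] x₁ % 2 = T^[j] x₂ % 2) ∧ T^[t] x₁ % 2 ≠ T^[t] x₂ % 2) ↔
      (x₁ ≡ x₂ [MOD 2 ^ t] ∧ x₁ ≡ x₂ + 2 ^ t [MOD 2 ^ (t + 1)]) := by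
  have key : ((∀ j < t, T^[j] x₁ % 2 = T^[j] x₂ % 2) ∧ T^[t] x₁ % 2 ≠ T^[t] x₂ % 2) ↔
      (x₁ ≡ x₂ [MOD 2 ^ t] ∧ ¬ x₁ ≡ x₂ [MOD 2 ^ (t+1)]) := by
    rw [patt t, patt (t+1)]
    constructor
    · rintro ⟨h, hd⟩
      refine ⟨h, fun hc => hd ?_⟩
      exact hc t (by omega)
    · rintro ⟨h, hd⟩
      refine ⟨h, fun hc => hd ?_⟩
      intro j hj
      rcases Nat.lt_succ_iff_lt_or_eq.mp hj with hj' | rfl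
      · exact h j hj'
      · exact hc
  rw [key]
  constructor
  · rintro ⟨h, hd⟩
    refine ⟨h, ?_⟩
    rw [Nat.modEq_iff_dvd] at h ⊢
    rw [Nat.modEq_iff_dvd] at hd
    obtain ⟨c, hc⟩ := h
    have h2 : ¬ (2:ℤ) ∣ c := by
      intro ⟨d, hdd⟩
      apply hd
      refine ⟨d, ?_⟩
      push_cast at hc ⊢
      rw [hc, hdd, pow_succ]; ring
    push_cast at hc ⊢
    have hgoal : (x₂:ℤ) + 2^t - x₁ = 2^t * (c + 1) := by rw [mul_add]; push_cast at hc; linarith [hc]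
    rw [hgoal, pow_succ, mul_comm ((2:ℤ)^t) 2]
    rw [mul_comm ((2:ℤ)^t) (c+1)]
    apply mul_dvd_mul_right
    omega
  · rintro ⟨h, hd⟩
    refine ⟨h, ?_⟩
    intro hc
    rw [Nat.modEq_iff_dvd] at hd hc
    have : (2:ℤ)^(t+1) ∣ ((x₂:ℤ) + 2^t - x₁) - ((x₂:ℤ) - x₁) := by
      push_cast at hd hc ⊢
      exact dvd_sub hd hc
    have h2 : ((x₂:ℤ) + 2^t - x₁) - ((x₂:ℤ) - x₁) = 2^t := by push_cast; ring
    rw [h2, pow_succ] at this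
    have := Int.le_of_dvd (by positivity) this
    nlinarith [pow_pos (by norm_num : (0:ℤ) < 2) t]
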